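/- For a structurally saturated sequent G, the relation R_G on its clusters (C1 R_G C2 iff x R_G y for some x ∈ C1, y ∈ C2) is a partial order, and the relation ≤_G on its clusters (C1 ≤_G C2 iff every y ∈ C2 has some x ∈ C1 with x ≤_G y) is a preorder; if G is moreover layered, then ≤_G on clusters is a partial order. -/
import Mathlib


/-- Formulas of intuitionistic modal logic, built from atomic propositions
`a ∈ ℕ` by `A ::= ⊥ | a | (A∧A) | (A∨A) | (A⊃A) | □A | ◇A`. -/
inductive Formula : Type
  | bot  : Formula
  | atom : ℕ → Formula
  | and  : Formula → Formula → Formula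
  | or   : Formula → Formula → Formula
  | imp  : Formula → Formula → Formula
  | box  : Formula → Formula
  | dia  : Formula → Formula
  deriving DecidableEq
/-- A labelled sequent `G = (R, Γ ⟹ Δ)`: relational atoms `x ≤ y` (`le`) and
`x R y` (`rel`) over labels (natural numbers) together with the labelled formulas
occurring on the left (`Γ`) and on the right (`Δ`) of the sequent arrow. -/
structure LSeq : Type where
  le : Set (ℕ × ℕ)
  rel : Set (ℕ × ℕ)
  left : Set (ℕ × Formula)
  right : Set (ℕ × Formula)
namespace LSeq

/-- `x ≤_G y`. -/
def Le (G : LSeq) (x y : ℕ) : Prop := (x, y) ∈ G.le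
/-- `x R_G y`. -/
def Rel (G : LSeq) (x y : ℕ) : Prop := (x, y) ∈ G.rel
/-- `x:A•`, i.e. `x:A` occurs on the left of `G`. -/
def Black (G : LSeq) (x : ℕ) (A : Formula) : Prop := (x, A) ∈ G.left
/-- `x:A∘`, i.e. `x:A` occurs on the right of `G`. -/
def White (G : LSeq) (x : ℕ) (A : Formula) : Prop := (x, A) ∈ G.right

/-- The set of labels occurring in `G`. -/
def labels (G : LSeq) : Set ℕ :=
  {x | (∃ y, G.Le x y ∨ G.Le y x ∨ G.Rel x y ∨ G.Rel y x) ∨ ∃ A, G.Black x A ∨ G.White x A}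

/-- `G` is a finite labelled sequent. -/
def FiniteSeq (G : LSeq) : Prop :=
  G.le.Finite ∧ G.rel.Finite ∧ G.left.Finite ∧ G.right.Finite

/-- Add labelled formulas to the left of a sequent. -/
def addLeft (G : LSeq) (s : Set (ℕ × Formula)) : LSeq := { G with left := G.left ∪ s }
/-- Add labelled formulas to the right of a sequent. -/
def addRight (G : LSeq) (s : Set (ℕ × Formula)) : LSeq := { G with right := G.right ∪ s }

/-- Happiness for a left (`•`) occurrence of a formula at label `x` in `G` (Def. 5.3). -/
def BlackHappy (G : LSeq) (x : ℕ) : Formula → Prop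
  | Formula.bot => False
  | Formula.atom _ => True
  | Formula.and A B => G.Black x A ∧ G.Black x B
  | Formula.or A B => G.Black x A ∨ G.Black x B
  | Formula.imp A B => G.White x A ∨ G.Black x B
  | Formula.box A => ∀ z, G.Rel x z → G.Black z A ∧ G.Black z (Formula.box A)
  | Formula.dia A => ∃ y, G.Rel x y ∧ G.Black y A

/-- Happiness for a right (`∘`) occurrence of a formula at label `x` in `G` (Def. 5.3). -/
def WhiteHappy (G : LSeq) (x : ℕ) : Formula → Prop
  | Formula.bot => True
  | Formula.atom a => ¬ G.Black x (Formula.atom a)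
  | Formula.and A B => G.White x A ∨ G.White x B
  | Formula.or A B => G.White x A ∧ G.White x B
  | Formula.imp A B => ∃ y, G.Le x y ∧ G.Black y A ∧ G.White y B
  | Formula.box A => ∃ y z, G.Le x y ∧ G.Rel y z ∧ G.White z A
  | Formula.dia A => ∀ y, G.Rel x y → G.White y A ∧ G.White y (Formula.dia A)

/-- A label is happy iff all formulas occurring at it are happy. -/
def HappyLabel (G : LSeq) (x : ℕ) : Prop :=
  (∀ A, G.Black x A → G.BlackHappy x A) ∧ (∀ A, G.White x A → G.WhiteHappy x A)

/-- The left exceptions for almost happy labels: formulas of the shape `⊥•`. -/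
def AlmostExceptB : Formula → Prop
  | Formula.bot => True
  | _ => False

/-- The left exceptions for naively happy labels: shapes `⊥•` and `(◇A)•`. -/
def NaiveExceptB : Formula → Prop
  | Formula.bot => True
  | Formula.dia _ => True
  | _ => False

/-- The right exceptions for almost/naively happy labels:
shapes `a∘`, `(A⊃B)∘` and `(□A)∘`. -/
def ExceptW : Formula → Prop
  | Formula.atom _ => True
  | Formula.imp _ _ => True
  | Formula.box _ => True
  | _ => False

/-- A label is almost happy iff all formulas occurring at it are happy,
except possibly those of the shapes `⊥•`, `a∘`, `(A⊃B)∘`, `(□A)∘`. -/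
def AlmostHappyLabel (G : LSeq) (x : ℕ) : Prop :=
  (∀ A, G.Black x A → ¬ AlmostExceptB A → G.BlackHappy x A) ∧
  (∀ A, G.White x A → ¬ ExceptW A → G.WhiteHappy x A)

/-- A label is naively happy iff all formulas occurring at it are happy,
except possibly those of the shapes `⊥•`, `(◇A)•`, `a∘`, `(A⊃B)∘`, `(□A)∘`. -/
def NaivelyHappyLabel (G : LSeq) (x : ℕ) : Prop :=
  (∀ A, G.Black x A → ¬ NaiveExceptB A → G.BlackHappy x A) ∧
  (∀ A, G.White x A → ¬ ExceptW A → G.WhiteHappy x A)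

/-- `G` is structurally saturated (Def. 5.5): closure under monotonicity (monL),
the frame conditions (F1) and (F2), and transitivity and reflexivity (on the
labels of `G`) of both `≤_G` and `R_G`. -/
def StructSat (G : LSeq) : Prop :=
  (∀ x y A, G.Le x y → G.Black x A → G.Black y A) ∧
  (∀ x y z, G.Rel x y → G.Le y z → ∃ u, G.Le x u ∧ G.Rel u z) ∧
  (∀ x y z, G.Rel x y → G.Le x z → ∃ u, G.Le y u ∧ G.Rel z u) ∧
  (∀ x y z, G.Le x y → G.Le y z → G.Le x z) ∧
  (∀ x ∈ G.labels, G.Le x x) ∧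
  (∀ x y z, G.Rel x y → G.Rel y z → G.Rel x z) ∧
  (∀ x ∈ G.labels, G.Rel x x)

/-- `G` is happy iff it is structurally saturated and all its labels are happy. -/
def Happy (G : LSeq) : Prop := G.StructSat ∧ ∀ x ∈ G.labels, G.HappyLabel x

/-- `G` is axiomatic iff some label carries `x:a•` and `x:a∘`, or carries `x:⊥•`. -/
def Axiomatic (G : LSeq) : Prop :=
  ∃ x, (∃ a, G.Black x (Formula.atom a) ∧ G.White x (Formula.atom a)) ∨
       G.Black x Formula.bot

/-- The reflexive-transitive closure of `R_G ∪ R_G⁻¹`: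
its equivalence classes are the layers of `G`. -/
def LayerRel (G : LSeq) : ℕ → ℕ → Prop :=
  Relation.ReflTransGen (fun x y => G.Rel x y ∨ G.Rel y x)

/-- The layer of a label. -/
def layerOf (G : LSeq) (x : ℕ) : Set ℕ := {y | G.LayerRel x y}

/-- `L` is a layer of `G`: an equivalence class of `LayerRel`. -/
def IsLayer (G : LSeq) (L : Set ℕ) : Prop := ∃ x ∈ G.labels, L = G.layerOf x

/-- `G` is layered (Def. 6.2). -/
def Layered (G : LSeq) : Prop :=
  (∀ x y, G.Rel x y → x ≠ y → ¬ G.Le x y ∧ ¬ G.Le y x) ∧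
  (∀ x x' y y', G.Rel x y → G.Rel x' y' → G.Le x x' → x ≠ x' → ¬ G.Le y' y)

/-- The order on layers: `L1 ≤ L2` iff `x ≤_G y` for some `x ∈ L1`, `y ∈ L2`. -/
def LayerLE (G : LSeq) (L1 L2 : Set ℕ) : Prop := ∃ x ∈ L1, ∃ y ∈ L2, G.Le x y

/-- Strict order on layers. -/
def LayerLT (G : LSeq) (L1 L2 : Set ℕ) : Prop := G.LayerLE L1 L2 ∧ L1 ≠ L2

/-- `G` is tree-layered: it is layered, there is a ≤-least layer, and any two
layers below a common layer are ≤-comparable. -/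
def TreeLayered (G : LSeq) : Prop :=
  G.Layered ∧
  (∃ L0, G.IsLayer L0 ∧ ∀ L, G.IsLayer L → G.LayerLE L0 L) ∧
  (∀ L L' L'', G.IsLayer L → G.IsLayer L' → G.IsLayer L'' →
    G.LayerLE L' L → G.LayerLE L'' L → G.LayerLE L' L'' ∨ G.LayerLE L'' L')

/-- `L` is a topmost (≤-maximal) layer of `G`. -/
def Topmost (G : LSeq) (L : Set ℕ) : Prop :=
  G.IsLayer L ∧ ∀ L', G.IsLayer L' → G.LayerLE L L' → L' = L

/-- The cluster of a label: its equivalence class under `R_G ∩ R_G⁻¹`. -/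
def clusterOf (G : LSeq) (x : ℕ) : Set ℕ := {y | G.Rel x y ∧ G.Rel y x}

/-- `C` is a cluster of `G`. -/
def IsCluster (G : LSeq) (C : Set ℕ) : Prop := ∃ x ∈ G.labels, C = G.clusterOf x

/-- The relation `R_G` on clusters: `C1 R_G C2` iff `x R_G y`
for some `x ∈ C1`, `y ∈ C2`. -/
def ClRel (G : LSeq) (C1 C2 : Set ℕ) : Prop := ∃ x ∈ C1, ∃ y ∈ C2, G.Rel x y

/-- The relation `≤_G` on clusters: `C1 ≤_G C2` iff every `y ∈ C2` has some
`x ∈ C1` with `x ≤_G y`. -/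
def ClLe (G : LSeq) (C1 C2 : Set ℕ) : Prop := ∀ y ∈ C2, ∃ x ∈ C1, G.Le x y

/-- `G` is tree-clustered: it is structurally saturated, some cluster is
`R_G`-below every cluster, and any two clusters below a common cluster are
`R_G`-comparable. -/
def TreeClustered (G : LSeq) : Prop :=
  G.StructSat ∧
  (∀ C' C'', G.IsCluster C' → G.IsCluster C'' →
    ∃ C, G.IsCluster C ∧ G.ClRel C C' ∧ G.ClRel C C'') ∧
  (∀ C C' C'', G.IsCluster C → G.IsCluster C' → G.IsCluster C'' →
    G.ClRel C' C → G.ClRel C'' C → G.ClRel C' C'' ∨ G.ClRel C'' C')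

/-- `G` is stable: tree-layered, tree-clustered, and all inner (non-topmost)
layers are happy. -/
def Stable (G : LSeq) : Prop :=
  G.TreeLayered ∧ G.TreeClustered ∧
  ∀ L, G.IsLayer L → ¬ G.Topmost L → ∀ x ∈ L, G.HappyLabel x

/-- `G` is semi-saturated: stable with all topmost layers naively happy. -/
def SemiSaturated (G : LSeq) : Prop :=
  G.Stable ∧ ∀ L, G.Topmost L → ∀ x ∈ L, G.NaivelyHappyLabel x

/-- `G` is saturated: stable with all topmost layers almost happy. -/
def Saturated (G : LSeq) : Prop :=
  G.Stable ∧ ∀ L, G.Topmost L → ∀ x ∈ L, G.AlmostHappyLabel x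

/-- Labels `x` (in `G`) and `y` (in `H`) are equivalent (`x ∼ y`) iff they carry
exactly the same left formulas and the same right formulas. -/
def LabEquiv (G : LSeq) (x : ℕ) (H : LSeq) (y : ℕ) : Prop :=
  (∀ A, G.Black x A ↔ H.Black y A) ∧ (∀ A, G.White x A ↔ H.White y A)

/-- A label has no past iff `y ≤_G x` implies `y = x`. -/
def NoPast (G : LSeq) (x : ℕ) : Prop := ∀ y, G.Le y x → y = x

end LSeq

/-- A stable set of sequents: finite with all elements stable. -/
def StableSet (S : Set LSeq) : Prop := S.Finite ∧ ∀ G ∈ S, G.Stable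
/-- A semi-saturated set of sequents: finite with all elements semi-saturated. -/
def SemiSaturatedSet (S : Set LSeq) : Prop := S.Finite ∧ ∀ G ∈ S, G.SemiSaturated
/-- A saturated set of sequents: finite with all elements saturated. -/
def SaturatedSet (S : Set LSeq) : Prop := S.Finite ∧ ∀ G ∈ S, G.Saturated


private lemma cluster_eq_of (G : LSeq) (htr : ∀ x y z, G.Rel x y → G.Rel y z → G.Rel x z)
    {a b : ℕ} (hab : G.Rel a b) (hba : G.Rel b a) : G.clusterOf a = G.clusterOf b := by
  ext z
  constructor
  · rintro ⟨h1, h2⟩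
    exact ⟨htr _ _ _ hba h1, htr _ _ _ h2 hab⟩
  · rintro ⟨h1, h2⟩
    exact ⟨htr _ _ _ hab h1, htr _ _ _ h2 hba⟩

/-- For a structurally saturated sequent `G`, the relation
`R_G` on its clusters is a partial order and the relation `≤_G` on its clusters
is a preorder; if `G` is moreover layered, then `≤_G` on clusters is a partial
order. -/
theorem cluster_orders (G : LSeq) (hsat : G.StructSat) :
    -- R_G on clusters is a partial order
    ((∀ C, G.IsCluster C → G.ClRel C C) ∧
     (∀ C1 C2 C3, G.IsCluster C1 → G.IsCluster C2 → G.IsCluster C3 →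
       G.ClRel C1 C2 → G.ClRel C2 C3 → G.ClRel C1 C3) ∧
     (∀ C1 C2, G.IsCluster C1 → G.IsCluster C2 →
       G.ClRel C1 C2 → G.ClRel C2 C1 → C1 = C2)) ∧
    -- ≤_G on clusters is a preorder
    ((∀ C, G.IsCluster C → G.ClLe C C) ∧
     (∀ C1 C2 C3, G.IsCluster C1 → G.IsCluster C2 → G.IsCluster C3 →
       G.ClLe C1 C2 → G.ClLe C2 C3 → G.ClLe C1 C3)) ∧
    -- if G is layered, ≤_G on clusters is antisymmetric as well
    (G.Layered →
      ∀ C1 C2, G.IsCluster C1 → G.IsCluster C2 →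
        G.ClLe C1 C2 → G.ClLe C2 C1 → C1 = C2) := by
  obtain ⟨hmon, hF1, hF2, hletr, hlerefl, hrtr, hrrefl⟩ := hsat
  have hlab_rel : ∀ {x y : ℕ}, G.Rel x y → y ∈ G.labels := by
    intro x y h; exact Or.inl ⟨x, Or.inr (Or.inr (Or.inr h))⟩
  have hmem : ∀ x ∈ G.labels, x ∈ G.clusterOf x := by
    intro x hx; exact ⟨hrrefl x hx, hrrefl x hx⟩
  refine ⟨⟨?_, ?_, ?_⟩, ⟨?_, ?_⟩, ?_⟩
  · rintro C ⟨a, ha, rfl⟩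
    exact ⟨a, hmem a ha, a, hmem a ha, hrrefl a ha⟩
  · rintro C1 C2 C3 ⟨a, ha, rfl⟩ ⟨b, hb, rfl⟩ ⟨c, hc, rfl⟩
      ⟨x, hx, y, hy, hxy⟩ ⟨u, hu, v, hv, huv⟩
    refine ⟨x, hx, v, hv, ?_⟩
    exact hrtr _ _ _ (hrtr _ _ _ (hrtr _ _ _ hxy hy.2) hu.1) huv
  · rintro C1 C2 ⟨a, ha, rfl⟩ ⟨b, hb, rfl⟩ ⟨x, hx, y, hy, hxy⟩ ⟨u, hu, v, hv, huv⟩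
    have hab : G.Rel a b := hrtr _ _ _ (hrtr _ _ _ hx.1 hxy) hy.2
    have hba : G.Rel b a := hrtr _ _ _ (hrtr _ _ _ hu.1 huv) hv.2
    exact cluster_eq_of G hrtr hab hba
  · rintro C ⟨a, ha, rfl⟩
    intro y hy
    refine ⟨y, hy, hlerefl y (hlab_rel hy.1)⟩
  · rintro C1 C2 C3 ⟨a, ha, rfl⟩ ⟨b, hb, rfl⟩ ⟨c, hc, rfl⟩ h12 h23
    intro z hz
    obtain ⟨y, hy, hyz⟩ := h23 z hz
    obtain ⟨x, hx, hxy⟩ := h12 y hy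
    exact ⟨x, hx, hletr _ _ _ hxy hyz⟩
  · rintro ⟨hlay1, hlay2⟩ C1 C2 ⟨a, ha, rfl⟩ ⟨b, hb, rfl⟩ h12 h21
    obtain ⟨x, hx, hxb⟩ := h12 b (hmem b hb)
    obtain ⟨y, hy, hya⟩ := h21 a (hmem a ha)
    -- F2 on Rel x a, Le x b
    obtain ⟨u, hau, hbu⟩ := hF2 x a b hx.2 hxb
    have hyu : G.Rel y u := hrtr _ _ _ hy.2 hbu
    have hyu' : G.Le y u := hletr _ _ _ hya hau
    have hyeq : y = u := by
      by_contra hne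
      exact (hlay1 y u hyu hne).1 hyu'
    subst hyeq
    have hay : a = y := by
      by_contra hne
      exact hlay2 a y a y (hrrefl a ha) (hrrefl y (hlab_rel hy.1)) hau hne hya
    rw [hay] at *
    exact cluster_eq_of G hrtr hy.2 hy.1
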